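/- The group presented on six generators a, b, c, d, e, f with the six relations a = 1, b = 1, b·e⁻¹ = 1, a·d⁻¹ = 1, c·d·b·f·c⁻¹·a⁻¹ = 1, b⁻¹·c⁻¹·f·a·e·c = 1 (the unknot template presentation) is isomorphic to the additive group of integers ℤ (equivalently, to the free group on one generator). -/

import Mathlib

/-!
The relations `a`, `b`, `b·e⁻¹`, `a·d⁻¹` kill `a, b, d, e`, after which `c·d·b·f·c⁻¹·a⁻¹`
reads `c·f·c⁻¹ = 1`, so `f = 1` too and the last relation becomes trivial. Hence the group is
cyclic, generated by `c`. It is infinite because `c ↦ 1`, all other generators `↦ 0`, respects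
the relations and so gives a surjection onto `ℤ`.
-/

/-- The six relations of the unknot template presentation on generators
`a, b, c, d, e, f` (encoded as `0, …, 5 : Fin 6`):
`a`, `b`, `b·e⁻¹`, `a·d⁻¹`, `c·d·b·f·c⁻¹·a⁻¹`, `b⁻¹·c⁻¹·f·a·e·c`. -/
def unknotTemplateRels : Set (FreeGroup (Fin 6)) :=
  let a := FreeGroup.of (0 : Fin 6)
  let b := FreeGroup.of (1 : Fin 6)
  let c := FreeGroup.of (2 : Fin 6)
  let d := FreeGroup.of (3 : Fin 6)
  let e := FreeGroup.of (4 : Fin 6)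
  let f := FreeGroup.of (5 : Fin 6)
  {a, b, b * e⁻¹, a * d⁻¹, c * d * b * f * c⁻¹ * a⁻¹, b⁻¹ * c⁻¹ * f * a * e * c}

lemma MonoidHom.surjective_of_map_eq_ofAdd_one {G : Type*} [Group G]
    (φ : G →* Multiplicative ℤ) {g : G} (hg : φ g = Multiplicative.ofAdd 1) :
    Function.Surjective φ :=
  fun n => ⟨g ^ n.toAdd, by rw [map_zpow, hg, ← ofAdd_zsmul, smul_eq_mul, mul_one, ofAdd_toAdd]⟩

lemma PresentedGroup.zpowers_of_eq_top {α : Type*} {rels : Set (FreeGroup α)} {i : α}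
    (h : ∀ j, j ≠ i → (PresentedGroup.of j : PresentedGroup rels) = 1) :
    Subgroup.zpowers (PresentedGroup.of i : PresentedGroup rels) = ⊤ := by
  rw [eq_top_iff, ← PresentedGroup.closure_range_of, Subgroup.closure_le]
  rintro _ ⟨j, rfl⟩
  by_cases hj : j = i
  · exact hj ▸ Subgroup.mem_zpowers _
  · exact h j hj ▸ Subgroup.one_mem _

namespace UnknotTemplate

lemma of_eq_one {i : Fin 6} (hi : i ≠ 2) :
    (PresentedGroup.of i : PresentedGroup unknotTemplateRels) = 1 := by
  set x : Fin 6 → PresentedGroup unknotTemplateRels := PresentedGroup.of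
  have rel {r : FreeGroup (Fin 6)} (hr : r ∈ unknotTemplateRels) :
      PresentedGroup.mk unknotTemplateRels r = 1 := PresentedGroup.one_of_mem hr
  have ha : x 0 = 1 := rel (by simp [unknotTemplateRels])
  have hb : x 1 = 1 := rel (by simp [unknotTemplateRels])
  have he : x 1 * (x 4)⁻¹ = 1 := rel (by simp [unknotTemplateRels])
  have hd : x 0 * (x 3)⁻¹ = 1 := rel (by simp [unknotTemplateRels])
  have hf : x 2 * x 3 * x 1 * x 5 * (x 2)⁻¹ * (x 0)⁻¹ = 1 := rel (by simp [unknotTemplateRels])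
  simp only [ha, hb, one_mul, inv_eq_one] at he hd
  simp only [ha, hb, hd, mul_one, inv_one, mul_inv_eq_one, mul_eq_left] at hf
  fin_cases i
  exacts [ha, hb, absurd rfl hi, hd, he, hf]

/-- The exponent sum of `c`, which vanishes on every relation. -/
def winding : PresentedGroup unknotTemplateRels →* Multiplicative ℤ :=
  PresentedGroup.toGroup (f := Pi.mulSingle 2 (Multiplicative.ofAdd 1)) <| by
    simp [unknotTemplateRels]

lemma winding_of_two : winding (PresentedGroup.of 2) = Multiplicative.ofAdd 1 :=
  PresentedGroup.toGroup.of _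

end UnknotTemplate

/-- The unknot template presentation
`⟨a,b,c,d,e,f | a, b, b·e⁻¹, a·d⁻¹, c·d·b·f·c⁻¹·a⁻¹, b⁻¹·c⁻¹·f·a·e·c⟩`
is isomorphic to the (additive) group of integers `ℤ`, i.e. to the free group
on one generator. -/
theorem unknot_template_iso_int :
    Nonempty (PresentedGroup unknotTemplateRels ≃* Multiplicative ℤ) := by
  have hgen := PresentedGroup.zpowers_of_eq_top fun _ => UnknotTemplate.of_eq_one
  have : Infinite (PresentedGroup unknotTemplateRels) := .of_surjective _
    (UnknotTemplate.winding.surjective_of_map_eq_ofAdd_one UnknotTemplate.winding_of_two)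
  exact ⟨(intEquivOfZPowersEqTop _ hgen).symm⟩
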